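/- arXiv:1106.4004 — 6 statements merged into one kernel-verified Lean document; each statement's English description precedes it below -/
import Mathlib

section
/- Principle of exchange of stabilities: let σ > 0, let λ_c = min_{K∈𝒫} (|K|⁴ + σ)/|K|², and let 𝒮 ⊆ 𝒫 be the set of wave vectors attaining this minimum. Then for every K ∈ 𝒮 and every λ ∈ ℝ: β_K(λ) < 0 if λ < λ_c, β_K(λ) = 0 if λ = λ_c, and β_K(λ) > 0 if λ > λ_c; moreover β_K(λ_c) < 0 for every K ∈ 𝒫 \ 𝒮. -/
/-- The permissible set of wave-vector indices: triples of nonnegative integers,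
not all zero. -/
def perm : Set (ℕ × ℕ × ℕ) := {k | k ≠ (0, 0, 0)}

/-- `|K|² = π²(k₁²/L₁² + k₂²/L₂² + k₃²/L₃²)`. -/
noncomputable def Ksq (L₁ L₂ L₃ : ℝ) (k : ℕ × ℕ × ℕ) : ℝ :=
  Real.pi ^ 2 * ((k.1 : ℝ) ^ 2 / L₁ ^ 2 + (k.2.1 : ℝ) ^ 2 / L₂ ^ 2 + (k.2.2 : ℝ) ^ 2 / L₃ ^ 2)

/-- The eigenvalue `β_K(λ) = −|K|⁴ + λ|K|² − σ` of the linearized operator. -/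
noncomputable def betaK (L₁ L₂ L₃ σ : ℝ) (k : ℕ × ℕ × ℕ) (lam : ℝ) : ℝ :=
  -(Ksq L₁ L₂ L₃ k) ^ 2 + lam * Ksq L₁ L₂ L₃ k - σ

lemma Ksq_pos {L₁ L₂ L₃ : ℝ} (hL₁ : 0 < L₁) (hL₂ : 0 < L₂) (hL₃ : 0 < L₃)
    {k : ℕ × ℕ × ℕ} (hk : k ∈ perm) : 0 < Ksq L₁ L₂ L₃ k := by
  obtain ⟨a, b, c⟩ := k
  have h : a ≠ 0 ∨ b ≠ 0 ∨ c ≠ 0 := by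
    by_contra h
    push_neg at h
    exact hk (by simp [h.1, h.2.1, h.2.2])
  unfold Ksq
  have hπ : (0:ℝ) < Real.pi ^ 2 := by positivity
  apply mul_pos hπ
  rcases h with h | h | h
  · have : (0:ℝ) < (a:ℝ)^2 / L₁^2 := by positivity
    have h2 : (0:ℝ) ≤ (b:ℝ)^2 / L₂^2 := by positivity
    have h3 : (0:ℝ) ≤ (c:ℝ)^2 / L₃^2 := by positivity
    linarith
  · have : (0:ℝ) < (b:ℝ)^2 / L₂^2 := by positivity
    have h2 : (0:ℝ) ≤ (a:ℝ)^2 / L₁^2 := by positivity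
    have h3 : (0:ℝ) ≤ (c:ℝ)^2 / L₃^2 := by positivity
    linarith
  · have : (0:ℝ) < (c:ℝ)^2 / L₃^2 := by positivity
    have h2 : (0:ℝ) ≤ (a:ℝ)^2 / L₁^2 := by positivity
    have h3 : (0:ℝ) ≤ (b:ℝ)^2 / L₂^2 := by positivity
    linarith

/-- Principle of exchange of stabilities. With
λ_c = min_{K∈𝒫} (|K|⁴ + σ)/|K|² and 𝒮 the set of minimizers, for K ∈ 𝒮 one has
β_K(λ) < 0 for λ < λ_c, β_K(λ_c) = 0, β_K(λ) > 0 for λ > λ_c; and β_K(λ_c) < 0 for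
K ∈ 𝒫 \ 𝒮. -/
theorem stmt_2 (σ L₁ L₂ L₃ lamc : ℝ) (hσ : 0 < σ)
    (hL₁ : 0 < L₁) (hL₂ : 0 < L₂) (hL₃ : 0 < L₃)
    (hlamc : IsLeast ((fun K => (Ksq L₁ L₂ L₃ K ^ 2 + σ) / Ksq L₁ L₂ L₃ K) '' perm) lamc) :
    (∀ K ∈ perm, (Ksq L₁ L₂ L₃ K ^ 2 + σ) / Ksq L₁ L₂ L₃ K = lamc →
      ∀ lam : ℝ,
        (lam < lamc → betaK L₁ L₂ L₃ σ K lam < 0) ∧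
        (lam = lamc → betaK L₁ L₂ L₃ σ K lam = 0) ∧
        (lamc < lam → 0 < betaK L₁ L₂ L₃ σ K lam)) ∧
    (∀ K ∈ perm, (Ksq L₁ L₂ L₃ K ^ 2 + σ) / Ksq L₁ L₂ L₃ K ≠ lamc →
      betaK L₁ L₂ L₃ σ K lamc < 0) := by
  constructor
  · intro K hK hmin lam
    have hx := Ksq_pos hL₁ hL₂ hL₃ hK
    set x := Ksq L₁ L₂ L₃ K with hxdef
    have key : x ^ 2 + σ = lamc * x := by
      field_simp at hmin
      linarith [hmin]
    refine ⟨fun h => ?_, fun h => ?_, fun h => ?_⟩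
    · unfold betaK; rw [← hxdef]; nlinarith
    · unfold betaK; rw [← hxdef]; nlinarith
    · unfold betaK; rw [← hxdef]; nlinarith
  · intro K hK hne
    have hx := Ksq_pos hL₁ hL₂ hL₃ hK
    set x := Ksq L₁ L₂ L₃ K with hxdef
    have hle : lamc ≤ (x ^ 2 + σ) / x := hlamc.2 ⟨K, hK, rfl⟩
    have hlt : lamc < (x ^ 2 + σ) / x := lt_of_le_of_ne hle (Ne.symm hne)
    have : lamc * x < x ^ 2 + σ := (lt_div_iff₀ hx).mp hlt
    unfold betaK; rw [← hxdef]; linarith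
end

section
/- Second-order center manifold identity in the lamellar case: let k₁ be a positive integer, a = k₁π/L₁, ρ = a², and let λ, σ, γ₂, y ∈ ℝ with D := 14ρ² − 2λρ − σ ≠ 0. Set β₁ = −ρ² + λρ − σ, ξ = ρ/D, v(x) = y·cos(a x₁), and Φ(x) = −2ξγ₂y²·cos(2a x₁). Then the pointwise identity 2β₁Φ + Δ²Φ + λΔΦ + σΦ = γ₂ Δ(v²) holds on Ω = (0,L₁)×(0,L₂)×(0,L₃); equivalently, (2β₁ − L_λ)Φ = γ₂Δ(v²) where L_λ w = −Δ²w − λΔw − σw. -/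
open Real Set

/-- The Laplacian `Δf` of a function of three real variables. -/
noncomputable def lap3 (f : ℝ → ℝ → ℝ → ℝ) (x y z : ℝ) : ℝ :=
  deriv (deriv (fun t => f t y z)) x + deriv (deriv (fun t => f x t z)) y +
    deriv (deriv (fun t => f x y t)) z

lemma deriv_const_cos (c b : ℝ) :
    deriv (fun t => c * Real.cos (b * t)) = fun t => -(c * b) * Real.sin (b * t) := by
  funext t
  have h : HasDerivAt (fun t => c * Real.cos (b * t)) (-(c * b) * Real.sin (b * t)) t := by
    have hbt : HasDerivAt (fun t : ℝ => b * t) b t := by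
      simpa using (hasDerivAt_id t).const_mul b
    have := ((Real.hasDerivAt_cos (b * t)).comp t hbt).const_mul c
    refine this.congr_deriv ?_
    ring
  exact h.deriv

lemma deriv_const_sin (c b : ℝ) :
    deriv (fun t => c * Real.sin (b * t)) = fun t => (c * b) * Real.cos (b * t) := by
  funext t
  have h : HasDerivAt (fun t => c * Real.sin (b * t)) ((c * b) * Real.cos (b * t)) t := by
    have hbt : HasDerivAt (fun t : ℝ => b * t) b t := by
      simpa using (hasDerivAt_id t).const_mul b
    have := ((Real.hasDerivAt_sin (b * t)).comp t hbt).const_mul c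
    refine this.congr_deriv ?_
    ring
  exact h.deriv

lemma lap3_cos (c₀ c b : ℝ) :
    lap3 (fun x _ _ => c₀ + c * Real.cos (b * x)) =
      fun x _ _ => 0 + (-(b ^ 2 * c)) * Real.cos (b * x) := by
  funext x yy z
  have h1 : (fun t => c₀ + c * Real.cos (b * t)) =
      (fun _ : ℝ => c₀) + fun t => c * Real.cos (b * t) := rfl
  have hd1 : deriv (fun t => c₀ + c * Real.cos (b * t)) =
      fun t => -(c * b) * Real.sin (b * t) := by
    funext t
    rw [deriv_const_add]
    exact congrFun (deriv_const_cos c b) t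
  simp only [lap3, hd1, deriv_const_sin, deriv_const']
  ring

/-- second-order center manifold identity in the lamellar case:
with `a = k₁π/L₁`, `ρ = a²`, `D = 14ρ² − 2λρ − σ ≠ 0`, `β₁ = −ρ² + λρ − σ`, `ξ = ρ/D`,
`v = y cos(a x₁)`, `Φ = −2ξγ₂y² cos(2a x₁)`, one has
`2β₁Φ + Δ²Φ + λΔΦ + σΦ = γ₂ Δ(v²)` pointwise on `Ω`. -/
theorem stmt_6 (L₁ L₂ L₃ lam σ γ₂ y : ℝ) (hL₁ : 0 < L₁) (hL₂ : 0 < L₂) (hL₃ : 0 < L₃)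
    (k₁ : ℕ) (hk₁ : 0 < k₁)
    (a ρ D β₁ ξ : ℝ) (ha : a = (k₁ : ℝ) * Real.pi / L₁) (hρ : ρ = a ^ 2)
    (hD : D = 14 * ρ ^ 2 - 2 * lam * ρ - σ) (hDne : D ≠ 0)
    (hβ₁ : β₁ = -ρ ^ 2 + lam * ρ - σ) (hξ : ξ = ρ / D)
    (v Φ : ℝ → ℝ → ℝ → ℝ)
    (hv : v = fun x₁ _ _ => y * Real.cos (a * x₁))
    (hΦ : Φ = fun x₁ _ _ => -2 * ξ * γ₂ * y ^ 2 * Real.cos (2 * a * x₁)) :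
    ∀ x₁ ∈ Ioo 0 L₁, ∀ x₂ ∈ Ioo 0 L₂, ∀ x₃ ∈ Ioo 0 L₃,
      2 * β₁ * Φ x₁ x₂ x₃ + lap3 (lap3 Φ) x₁ x₂ x₃ + lam * lap3 Φ x₁ x₂ x₃ +
          σ * Φ x₁ x₂ x₃ =
        γ₂ * lap3 (fun p q r => (v p q r) ^ 2) x₁ x₂ x₃ := by
  intro x₁ _ x₂ _ x₃ _
  have hΦ' : Φ = fun x (_ _ : ℝ) => 0 + (-2 * ξ * γ₂ * y ^ 2) * Real.cos (2 * a * x) := by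
    rw [hΦ]; funext p q r; ring
  have hv2 : (fun p q r => (v p q r) ^ 2) =
      fun p (_ _ : ℝ) => y ^ 2 / 2 + (y ^ 2 / 2) * Real.cos (2 * a * p) := by
    rw [hv]; funext p q r
    rw [mul_pow, Real.cos_sq]
    ring_nf
  rw [hΦ', hv2, lap3_cos, lap3_cos, lap3_cos]
  have hξD : ξ * D = ρ := by rw [hξ]; field_simp
  subst hρ hβ₁ hD
  have : ξ * (14 * (a ^ 2) ^ 2 - 2 * lam * a ^ 2 - σ) = a ^ 2 := hξD
  linear_combination (-2 * γ₂ * y ^ 2 * Real.cos (2 * a * x₁)) * this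
end

section
/- Exact coefficient identity b + 4c = 4d + e for the hexagonal reduced system: let ρ > 0, λ, σ, γ₂, γ₃ ∈ ℝ be such that 14ρ² − 2λρ − σ ≠ 0, 14ρ² − 2λρ − 2σ ≠ 0 and 7ρ² − λρ − σ ≠ 0. Define b = 2ρ²γ₂²/(14ρ² − 2λρ − σ) − (3ρ/4)γ₃, c = 3ρ²γ₂²/(14ρ² − 2λρ − 2σ) − (3ρ/4)γ₃, d = ρ²γ₂²/(28ρ² − 4λρ − 2σ) + 3ρ²γ₂²/(28ρ² − 4λρ − 4σ) − (9ρ/16)γ₃, and e = 3ρ²γ₂²/(7ρ² − λρ − σ) − (3ρ/2)γ₃. Then b + 4c = 4d + e. -/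
/-- exact coefficient identity `b + 4c = 4d + e` for the cubic
coefficients of the reduced equations in the hexagonal (HPC) case. -/
theorem stmt_12 (ρ lam σ γ₂ γ₃ : ℝ) (hρ : 0 < ρ)
    (h1 : 14 * ρ ^ 2 - 2 * lam * ρ - σ ≠ 0)
    (h2 : 14 * ρ ^ 2 - 2 * lam * ρ - 2 * σ ≠ 0)
    (h3 : 7 * ρ ^ 2 - lam * ρ - σ ≠ 0)
    (b c d e : ℝ)
    (hb : b = 2 * ρ ^ 2 * γ₂ ^ 2 / (14 * ρ ^ 2 - 2 * lam * ρ - σ) - (3 * ρ / 4) * γ₃)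
    (hc : c = 3 * ρ ^ 2 * γ₂ ^ 2 / (14 * ρ ^ 2 - 2 * lam * ρ - 2 * σ) - (3 * ρ / 4) * γ₃)
    (hd : d = ρ ^ 2 * γ₂ ^ 2 / (28 * ρ ^ 2 - 4 * lam * ρ - 2 * σ) +
        3 * ρ ^ 2 * γ₂ ^ 2 / (28 * ρ ^ 2 - 4 * lam * ρ - 4 * σ) - (9 * ρ / 16) * γ₃)
    (he : e = 3 * ρ ^ 2 * γ₂ ^ 2 / (7 * ρ ^ 2 - lam * ρ - σ) - (3 * ρ / 2) * γ₃) :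
    b + 4 * c = 4 * d + e := by
  have h4 : 28 * ρ ^ 2 - 4 * lam * ρ - 2 * σ ≠ 0 := by
    intro h; apply h1; linarith
  have h5 : 28 * ρ ^ 2 - 4 * lam * ρ - 4 * σ ≠ 0 := by
    intro h; apply h2; linarith
  subst hb hc hd he
  rw [show (28 * ρ ^ 2 - 4 * lam * ρ - 2 * σ) = 2 * (14 * ρ ^ 2 - 2 * lam * ρ - σ) by ring]
  rw [show (28 * ρ ^ 2 - 4 * lam * ρ - 4 * σ) = 4 * (7 * ρ ^ 2 - lam * ρ - σ) by ring]
  rw [show (14 * ρ ^ 2 - 2 * lam * ρ - 2 * σ) = 2 * (7 * ρ ^ 2 - lam * ρ - σ) by ring]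
  field_simp
  ring
end

section
/- Invariant straight lines of the critical hexagonal system: let κ, γ₂, b, c, d, e ∈ ℝ satisfy b + 4c = 4d + e, and define the planar vector field F(y₁,y₂) = (−(κγ₂/4)y₂² + by₁³ + cy₁y₂², −κγ₂y₁y₂ + dy₂³ + ey₁²y₂). Then for every t ∈ ℝ: F₂(t, 2t) = 2·F₁(t, 2t), F₂(t, −2t) = −2·F₁(t, −2t), and F₂(t, 0) = 0. In particular, along y₂ = ±2t one has F₁(t, ±2t) = −κγ₂t² + (b + 4c)t³, so the lines y₂ = 2y₁, y₂ = −2y₁ and y₂ = 0 are invariant under the flow of F. -/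
/-- invariant straight lines of the critical hexagonal system: if
`b + 4c = 4d + e`, the planar vector field
`F(y₁,y₂) = (−(κγ₂/4)y₂² + by₁³ + cy₁y₂², −κγ₂y₁y₂ + dy₂³ + ey₁²y₂)`
satisfies `F₂(t,2t) = 2F₁(t,2t)`, `F₂(t,−2t) = −2F₁(t,−2t)`, `F₂(t,0) = 0`, and
`F₁(t,±2t) = −κγ₂t² + (b+4c)t³`, so the lines `y₂ = ±2y₁` and `y₂ = 0` are
invariant under the flow of `F`. -/
theorem stmt_13 (κ γ₂ b c d e : ℝ) (h : b + 4 * c = 4 * d + e)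
    (F₁ F₂ : ℝ → ℝ → ℝ)
    (hF₁ : F₁ = fun y₁ y₂ => -(κ * γ₂ / 4) * y₂ ^ 2 + b * y₁ ^ 3 + c * y₁ * y₂ ^ 2)
    (hF₂ : F₂ = fun y₁ y₂ => -(κ * γ₂) * y₁ * y₂ + d * y₂ ^ 3 + e * y₁ ^ 2 * y₂) :
    ∀ t : ℝ,
      F₂ t (2 * t) = 2 * F₁ t (2 * t) ∧
      F₂ t (-(2 * t)) = -2 * F₁ t (-(2 * t)) ∧
      F₂ t 0 = 0 ∧
      F₁ t (2 * t) = -(κ * γ₂) * t ^ 2 + (b + 4 * c) * t ^ 3 ∧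
      F₁ t (-(2 * t)) = -(κ * γ₂) * t ^ 2 + (b + 4 * c) * t ^ 3 := by
  subst hF₁ hF₂
  intro t
  exact ⟨by linear_combination (-2 * t ^ 3) * h, by linear_combination (2 * t ^ 3) * h, by ring, by ring, by ring⟩
end

section
/- Bifurcated equilibria of the truncated hexagonal system for γ₂ = 0: let β > 0, b < 0, d < 0, b + 4c < 0, and assume 4d + e = b + 4c. Define F(y₁,y₂) = (βy₁ + by₁³ + cy₁y₂², βy₂ + dy₂³ + ey₁²y₂). Then the eight points (±√(−β/b), 0), (0, ±√(−β/d)), and (ε₁s, 2ε₂s) for ε₁, ε₂ ∈ {+1, −1} with s = √(−β/(b + 4c)), are all zeros of F, and they are nonzero and pairwise distinct provided b, d and b+4c are pairwise distinct. -/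
/-- bifurcated equilibria of the truncated hexagonal system for
`γ₂ = 0`: with `β > 0`, `b < 0`, `d < 0`, `b + 4c < 0`, `4d + e = b + 4c`, the eight
points `(±√(−β/b), 0)`, `(0, ±√(−β/d))` and `(±s, ±2s)` with `s = √(−β/(b+4c))`
are zeros of `F(y₁,y₂) = (βy₁ + by₁³ + cy₁y₂², βy₂ + dy₂³ + ey₁²y₂)`, are nonzero,
and are pairwise distinct provided `b`, `d` and `b + 4c` are pairwise distinct. -/
theorem stmt_15 (β b c d e : ℝ) (hβ : 0 < β) (hb : b < 0) (hd : d < 0)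
    (hbc : b + 4 * c < 0) (hde : 4 * d + e = b + 4 * c)
    (hbd : b ≠ d) (hb4 : b ≠ b + 4 * c) (hd4 : d ≠ b + 4 * c)
    (F : ℝ × ℝ → ℝ × ℝ)
    (hF : F = fun y => (β * y.1 + b * y.1 ^ 3 + c * y.1 * y.2 ^ 2,
        β * y.2 + d * y.2 ^ 3 + e * y.1 ^ 2 * y.2))
    (r q s : ℝ) (hr : r = Real.sqrt (-β / b)) (hq : q = Real.sqrt (-β / d))
    (hs : s = Real.sqrt (-β / (b + 4 * c)))
    (pts : List (ℝ × ℝ))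
    (hpts : pts = [(r, 0), (-r, 0), (0, q), (0, -q),
      (s, 2 * s), (s, -(2 * s)), (-s, 2 * s), (-s, -(2 * s))]) :
    (∀ p ∈ pts, F p = (0, 0) ∧ p ≠ (0, 0)) ∧ pts.Pairwise (· ≠ ·) := by
  have hbne : b ≠ 0 := ne_of_lt hb
  have hdne : d ≠ 0 := ne_of_lt hd
  have hcne : b + 4 * c ≠ 0 := ne_of_lt hbc
  have hr0 : (0:ℝ) < -β / b := div_pos_of_neg_of_neg (by linarith) hb
  have hq0 : (0:ℝ) < -β / d := div_pos_of_neg_of_neg (by linarith) hd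
  have hs0 : (0:ℝ) < -β / (b + 4 * c) := div_pos_of_neg_of_neg (by linarith) hbc
  have hrp : 0 < r := by rw [hr]; exact Real.sqrt_pos.2 hr0
  have hqp : 0 < q := by rw [hq]; exact Real.sqrt_pos.2 hq0
  have hsp : 0 < s := by rw [hs]; exact Real.sqrt_pos.2 hs0
  have hr2 : b * r ^ 2 = -β := by rw [hr, Real.sq_sqrt hr0.le]; field_simp
  have hq2 : d * q ^ 2 = -β := by rw [hq, Real.sq_sqrt hq0.le]; field_simp
  have hs2 : (b + 4 * c) * s ^ 2 = -β := by
    rw [hs, Real.sq_sqrt hs0.le]; field_simp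
  subst hF hpts
  have hrn : r ≠ 0 := hrp.ne'
  have hqn : q ≠ 0 := hqp.ne'
  have hsn : s ≠ 0 := hsp.ne'
  constructor
  · intro p hp
    fin_cases hp
    · refine ⟨?_, by simp [Prod.ext_iff, hrn]⟩
      simp only [Prod.mk.injEq]
      exact ⟨by linear_combination r * hr2, by linear_combination (0:ℝ) = 0⟩
    · refine ⟨?_, by simp [Prod.ext_iff]; intro h; linarith⟩
      simp only [Prod.mk.injEq]
      exact ⟨by linear_combination -r * hr2, by linear_combination (0:ℝ) = 0⟩
    · refine ⟨?_, by simp [Prod.ext_iff, hqn]⟩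
      simp only [Prod.mk.injEq]
      exact ⟨by linear_combination (0:ℝ) = 0, by linear_combination q * hq2⟩
    · refine ⟨?_, by simp [Prod.ext_iff]; intro h; linarith⟩
      simp only [Prod.mk.injEq]
      exact ⟨by linear_combination (0:ℝ) = 0, by linear_combination -q * hq2⟩
    · refine ⟨?_, by simp [Prod.ext_iff, hsn]⟩
      simp only [Prod.mk.injEq]
      exact ⟨by linear_combination s * hs2, by linear_combination 2 * s ^ 3 * hde + 2 * s * hs2⟩
    · refine ⟨?_, by simp [Prod.ext_iff, hsn]⟩
      simp only [Prod.mk.injEq]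
      exact ⟨by linear_combination s * hs2, by linear_combination -(2 * s ^ 3) * hde - 2 * s * hs2⟩
    · refine ⟨?_, by simp [Prod.ext_iff]; intro h; linarith⟩
      simp only [Prod.mk.injEq]
      exact ⟨by linear_combination -s * hs2, by linear_combination 2 * s ^ 3 * hde + 2 * s * hs2⟩
    · refine ⟨?_, by simp [Prod.ext_iff]; intro h; linarith⟩
      simp only [Prod.mk.injEq]
      exact ⟨by linear_combination -s * hs2, by linear_combination -(2 * s ^ 3) * hde - 2 * s * hs2⟩
  · simp only [List.pairwise_cons, List.mem_cons, List.not_mem_nil, or_false,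
      ne_eq, Prod.mk.injEq, not_and, List.Pairwise.nil, and_true]
    norm_num
    refine ⟨⟨?_, ?_, ?_, ?_, ?_⟩, ⟨?_, ?_, ?_, ?_⟩, ⟨?_, ?_, ?_, ?_, ?_⟩, ⟨?_, ?_, ?_, ?_⟩, ⟨?_, ?_, ?_⟩, ⟨?_, ?_⟩, ?_⟩ <;> intros <;> first | linarith | (intro h; linarith)
end

section
/- Spinodal formula: let a ∈ (0,1), N > 0, d > 0, l > 0 and χ ∈ ℝ, and define λ = (12d²a(1−a)/l²)·(2χ − (a² + (1−a)²)/(N a²(1−a)²)) and σ = 108d⁴/(l⁴N²a(1−a)). Then λ = 2√σ if and only if χN = √3/(2(a(1−a))^{3/2}) + (a² + (1−a)²)/(2a²(1−a)²). -/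
/-- spinodal formula: with
`λ = (12d²a(1−a)/l²)(2χ − (a² + (1−a)²)/(Na²(1−a)²))` and
`σ = 108d⁴/(l⁴N²a(1−a))`, one has `λ = 2√σ` if and only if
`χN = √3/(2(a(1−a))^{3/2}) + (a² + (1−a)²)/(2a²(1−a)²)`. -/
theorem stmt_19 (a N d l χ lam σ : ℝ)
    (ha : 0 < a) (ha1 : a < 1) (hN : 0 < N) (hd : 0 < d) (hl : 0 < l)
    (hlam : lam = (12 * d ^ 2 * a * (1 - a) / l ^ 2) *
      (2 * χ - (a ^ 2 + (1 - a) ^ 2) / (N * a ^ 2 * (1 - a) ^ 2)))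
    (hσ : σ = 108 * d ^ 4 / (l ^ 4 * N ^ 2 * a * (1 - a))) :
    lam = 2 * Real.sqrt σ ↔
      χ * N = Real.sqrt 3 / (2 * Real.sqrt (a * (1 - a)) ^ 3) +
        (a ^ 2 + (1 - a) ^ 2) / (2 * a ^ 2 * (1 - a) ^ 2) := by
  have ha' : 0 < 1 - a := by linarith
  set s := Real.sqrt (a * (1 - a)) with hsdef
  have hs : 0 < s := Real.sqrt_pos.mpr (by positivity)
  have hs2 : s ^ 2 = a * (1 - a) := Real.sq_sqrt (by positivity)
  have h3 : (Real.sqrt 3) ^ 2 = 3 := Real.sq_sqrt (by norm_num)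
  have h3pos : 0 < Real.sqrt 3 := Real.sqrt_pos.mpr (by norm_num)
  have key : Real.sqrt σ = 6 * Real.sqrt 3 * d ^ 2 / (l ^ 2 * N * s) := by
    rw [hσ]
    rw [show 108 * d ^ 4 / (l ^ 4 * N ^ 2 * a * (1 - a))
        = (6 * Real.sqrt 3 * d ^ 2 / (l ^ 2 * N * s)) ^ 2 by
      field_simp
      linear_combination 108 * hs2 - (36*a*(1-a)) * h3]
    exact Real.sqrt_sq (by positivity)
  rw [hlam, key]
  constructor
  · intro h
    field_simp at h ⊢
    apply mul_left_cancel₀ (show (12*d^2*l^2*N*(a*(1-a)) : ℝ) ≠ 0 by positivity)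
    linear_combination (d^2*l^2*N*(a*(1-a))*s^2) * h + (12*d^2*l^2*N*(a*(1-a))^2*Real.sqrt 3) * hs2
  · intro h
    field_simp at h ⊢
    apply mul_left_cancel₀ (show (s^2 : ℝ) ≠ 0 by positivity)
    linear_combination 12 * h - (12*Real.sqrt 3*(a*(1-a))) * hs2
end
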